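/- Soundness of the inexactly garbage-collecting pushdown machine Γ̂CESK*tΞ: suppose ς ↦ΓCESKt ς′ in the garbage-collecting CESK_t machine, inv(ς{κ := κ̂}, Ξ) holds, and the continuation κ of ς satisfies κ ∈ unroll(Ξ,κ̂). Then there exist Ξ′, κ̂′, and σ″ such that (ς{κ := κ̂}, Ξ) ↦Γ̂ (ς̂′, Ξ′), where ς̂′ = ς′{κ := κ̂′, σ := σ″}, the continuation κ′ of ς′ satisfies κ′ ∈ unroll(Ξ′,κ̂′), and the store of ς′ restricted to live(ς′) is pointwise contained in σ″ restricted to l̂ive(ς̂′,Ξ′) (every value bound at an address in the former is bound at that address in the latter). -/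
import Mathlib


open Classical

noncomputable section

abbrev Var := ℕ
abbrev Addr := ℕ
abbrev Time := ℕ

/-- Expressions of the untyped call-by-value λ-calculus. -/
inductive Expr : Type
  | var : Var → Expr
  | app : Expr → Expr → Expr
  | lam : Var → Expr → Expr

/-- Environments: finite maps from variables to addresses. -/
abbrev Env := Var → Option Addr

/-- Values are closures (λx.e, ρ). -/
structure Value : Type where
  param : Var
  body : Expr
  env : Env

/-- The expression component of a closure (a λ-abstraction). -/
def Value.toExpr (v : Value) : Expr := .lam v.param v.body

/-- Stores map addresses to sets of values. -/
abbrev Store := Addr → Set Value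

/-- σ ⊔ [a ↦ v]. -/
def Store.join (σ : Store) (a : Addr) (v : Value) : Store :=
  fun b => if b = a then insert v (σ b) else σ b

/-- ρ[x ↦ a]. -/
def Env.ext (ρ : Env) (x : Var) (a : Addr) : Env :=
  fun y => if y = x then some a else ρ y

/-- Frames φ ::= appL(e,ρ) | appR(v). -/
inductive Frame : Type
  | appL : Expr → Env → Frame
  | appR : Value → Frame

/-- States of the CESK_t machine; a value state ⟨v,σ,κ⟩ is represented by
    control λx.e together with the closure's environment. -/
structure CESK : Type where
  e : Expr
  ρ : Env
  σ : Store
  κ : List Frame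
  t : Time

/-- The step relation of the CESK_t machine.  The `alloc` and `tick` functions
    are, per assumption, invariant under changes of the continuation, so they
    are given as functions of the remaining state components. -/
inductive CStep (allocF : Expr → Env → Store → Time → Addr)
    (tickF : Expr → Env → Store → Time → Time) : CESK → CESK → Prop
  | var {x ρ σ κ t a v} : ρ x = some a → v ∈ σ a →
      CStep allocF tickF ⟨.var x, ρ, σ, κ, t⟩
        ⟨v.toExpr, v.env, σ, κ, tickF (.var x) ρ σ t⟩
  | app {e₀ e₁ ρ σ κ t} :
      CStep allocF tickF ⟨.app e₀ e₁, ρ, σ, κ, t⟩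
        ⟨e₀, ρ, σ, .appL e₁ ρ :: κ, tickF (.app e₀ e₁) ρ σ t⟩
  | appL {v : Value} {e ρ σ κ t} :
      CStep allocF tickF ⟨v.toExpr, v.env, σ, .appL e ρ :: κ, t⟩
        ⟨e, ρ, σ, .appR v :: κ, tickF v.toExpr v.env σ t⟩
  | appR {v : Value} {x e ρ σ κ t} :
      CStep allocF tickF ⟨v.toExpr, v.env, σ, .appR ⟨x, e, ρ⟩ :: κ, t⟩
        ⟨e, ρ.ext x (allocF v.toExpr v.env σ t),
         σ.join (allocF v.toExpr v.env σ t) v, κ, tickF v.toExpr v.env σ t⟩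

/-- Contexts τ = ⟨e,ρ,σ⟩_t. -/
structure Ctx : Type where
  e : Expr
  ρ : Env
  σ : Store
  t : Time

/-- Abstract continuations kh ::= ε | φ·τ. -/
inductive AKont : Type
  | eps : AKont
  | cons : Frame → Ctx → AKont

/-- Continuation stores Ξ. -/
abbrev KStore := Ctx → Set AKont

/-- Ξ ⊔ [τ ↦ kh]. -/
def KStore.join (Ξ : KStore) (τ : Ctx) (kh : AKont) : KStore :=
  fun τ' => if τ' = τ then insert kh (Ξ τ') else Ξ τ'

/-- States of the CESK*tΞ machine. -/
structure ACESK : Type where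
  e : Expr
  ρ : Env
  σ : Store
  kh : AKont
  t : Time

/-- The step relation of the CESK*tΞ machine. -/
inductive AStep (allocF : Expr → Env → Store → Time → Addr)
    (tickF : Expr → Env → Store → Time → Time) :
    ACESK × KStore → ACESK × KStore → Prop
  | var {x ρ σ kh t a v Ξ} : ρ x = some a → v ∈ σ a →
      AStep allocF tickF (⟨.var x, ρ, σ, kh, t⟩, Ξ)
        (⟨v.toExpr, v.env, σ, kh, tickF (.var x) ρ σ t⟩, Ξ)
  | app {e₀ e₁ ρ σ kh t Ξ} :
      AStep allocF tickF (⟨.app e₀ e₁, ρ, σ, kh, t⟩, Ξ)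
        (⟨e₀, ρ, σ, .cons (.appL e₁ ρ) ⟨.app e₀ e₁, ρ, σ, t⟩,
          tickF (.app e₀ e₁) ρ σ t⟩,
         Ξ.join ⟨.app e₀ e₁, ρ, σ, t⟩ kh)
  | appL {v : Value} {e ρ σ τ t Ξ} :
      AStep allocF tickF (⟨v.toExpr, v.env, σ, .cons (.appL e ρ) τ, t⟩, Ξ)
        (⟨e, ρ, σ, .cons (.appR v) τ, tickF v.toExpr v.env σ t⟩, Ξ)
  | appR {v : Value} {x e ρ σ τ t kh Ξ} : kh ∈ Ξ τ →
      AStep allocF tickF (⟨v.toExpr, v.env, σ, .cons (.appR ⟨x, e, ρ⟩) τ, t⟩, Ξ)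
        (⟨e, ρ.ext x (allocF v.toExpr v.env σ t),
          σ.join (allocF v.toExpr v.env σ t) v, kh, tickF v.toExpr v.env σ t⟩, Ξ)

/-- base(kh), relative to the program e_pgm and initial timestamp t₀. -/
def base (epgm : Expr) (t₀ : Time) : AKont → CESK
  | .eps => ⟨epgm, fun _ => none, fun _ => ∅, [], t₀⟩
  | .cons _ τ => ⟨τ.e, τ.ρ, τ.σ, [], τ.t⟩

/-- kh ++ ε: the frame list of kh with its trailing context replaced by ε. -/
def AKont.frames : AKont → List Frame
  | .eps => []
  | .cons φ _ => [φ]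

/-- The table invariant invΞ. -/
inductive InvXi (allocF : Expr → Env → Store → Time → Addr)
    (tickF : Expr → Env → Store → Time → Time) (epgm : Expr) (t₀ : Time) :
    KStore → Prop
  | empty : InvXi allocF tickF epgm t₀ (fun _ => ∅)
  | extend {Ξ : KStore} {τ : Ctx} {K : Set AKont} :
      InvXi allocF tickF epgm t₀ Ξ →
      (∀ khc ∈ K, Relation.ReflTransGen (CStep allocF tickF)
          (base epgm t₀ khc) ⟨τ.e, τ.ρ, τ.σ, khc.frames, τ.t⟩) →
      InvXi allocF tickF epgm t₀ (fun τ' => if τ' = τ then K else Ξ τ')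

/-- The state invariant inv(sh,Ξ). -/
def StInv (allocF : Expr → Env → Store → Time → Addr)
    (tickF : Expr → Env → Store → Time → Time) (epgm : Expr) (t₀ : Time)
    (sh : ACESK) (Ξ : KStore) : Prop :=
  Relation.ReflTransGen (CStep allocF tickF)
    (base epgm t₀ sh.kh) ⟨sh.e, sh.ρ, sh.σ, sh.kh.frames, sh.t⟩ ∧
  InvXi allocF tickF epgm t₀ Ξ

/-- Unrolling of abstract continuations into frame lists. -/
inductive Unroll (Ξ : KStore) : AKont → List Frame → Prop
  | eps : Unroll Ξ .eps []
  | cons {φ τ kh κ} : kh ∈ Ξ τ → Unroll Ξ kh κ → Unroll Ξ (.cons φ τ) (φ :: κ)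

/-- ς{κ := kh}: a CESK_t state with its continuation replaced by an abstract one. -/
def setKont (ς : CESK) (kh : AKont) : ACESK := ⟨ς.e, ς.ρ, ς.σ, kh, ς.t⟩

/-- sh{kh := κ}: a CESK*tΞ state with its continuation replaced by a concrete one. -/
def setFrames (sh : ACESK) (κ : List Frame) : CESK := ⟨sh.e, sh.ρ, sh.σ, κ, sh.t⟩

/-- Free variables of an expression. -/
def fv : Expr → Set Var
  | .var x => {x}
  | .app e₀ e₁ => fv e₀ ∪ fv e₁
  | .lam x e => fv e \ {x}

/-- T(e,ρ) = { ρ(x) : x ∈ fv(e) }. -/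
def touchE (e : Expr) (ρ : Env) : Set Addr := {a | ∃ x ∈ fv e, ρ x = some a}

/-- Addresses touched by a value. -/
def touchV (v : Value) : Set Addr := touchE v.toExpr v.env

/-- Addresses touched by a frame. -/
def touchF : Frame → Set Addr
  | .appL e ρ => touchE e ρ
  | .appR v => touchV v

/-- a ⇝_σ b. -/
def ptsTo (σ : Store) (a b : Addr) : Prop := ∃ v ∈ σ a, b ∈ touchV v

/-- R(root, σ): addresses reachable from the roots through the store. -/
def reach (root : Set Addr) (σ : Store) : Set Addr :=
  {b | ∃ a ∈ root, Relation.ReflTransGen (ptsTo σ) a b}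

/-- σ|_L: the store restricted to domain L. -/
def restrict (σ : Store) (L : Set Addr) : Store :=
  fun a => {v | a ∈ L ∧ v ∈ σ a}

/-- Concrete live-address computation KLL* on frame lists. -/
def kll : List Frame → Set Addr → Set Addr
  | [], L => L
  | φ :: κ, L => kll κ (L ∪ touchF φ)

/-- Terms of the abstract rewrite system for stack liveness. -/
inductive KTerm : Type
  | run : AKont → Set Addr → KTerm
  | done : Set Addr → KTerm

/-- The abstract rewrite relation on KLL* terms. -/
inductive KStepR (Ξ : KStore) : KTerm → KTerm → Prop
  | eps {L} : KStepR Ξ (.run .eps L) (.done L)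
  | cons {φ τ kh L} : kh ∈ Ξ τ →
      KStepR Ξ (.run (.cons φ τ) L) (.run kh (L ∪ touchF φ))

/-- K̂LL(Ξ,kh): terminal results of the abstract rewrite system, started
    with L = ∅. -/
def KhatLL (Ξ : KStore) (kh : AKont) : Set (Set Addr) :=
  {L' | Relation.ReflTransGen (KStepR Ξ) (.run kh ∅) (.done L')}

/-- live(ς): live addresses of a CESK_t state. -/
def liveC (ς : CESK) : Set Addr := reach (touchE ς.e ς.ρ ∪ kll ς.κ ∅) ς.σ

/-- Γ(ς): garbage collect a CESK_t state. -/
def gcC (ς : CESK) : CESK := ⟨ς.e, ς.ρ, restrict ς.σ (liveC ς), ς.κ, ς.t⟩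

/-- The garbage-collecting CESK_t machine ↦ΓCESKt. -/
def CStepGC (allocF : Expr → Env → Store → Time → Addr)
    (tickF : Expr → Env → Store → Time → Time) : CESK → CESK → Prop :=
  fun ς ς'' => ∃ ς', CStep allocF tickF ς ς' ∧ ς'' = gcC ς'

/-- live*(sh,Ξ): possible live-address sets of an abstract state. -/
def liveStar (sh : ACESK) (Ξ : KStore) : Set (Set Addr) :=
  {L' | ∃ L ∈ KhatLL Ξ sh.kh, L' = reach (touchE sh.e sh.ρ ∪ L) sh.σ}

/-- Γ*(sh,Ξ): the exactly-collected variants of an abstract state. -/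
def gcStar (sh : ACESK) (Ξ : KStore) : Set ACESK :=
  {sh' | ∃ L ∈ liveStar sh Ξ, sh' = ⟨sh.e, sh.ρ, restrict sh.σ L, sh.kh, sh.t⟩}

/-- The exactly garbage-collecting pushdown machine ↦Γ*. -/
def AStepGC (allocF : Expr → Env → Store → Time → Addr)
    (tickF : Expr → Env → Store → Time → Time) :
    ACESK × KStore → ACESK × KStore → Prop :=
  fun p q => ∃ sh', AStep allocF tickF p (sh', q.2) ∧ q.1 ∈ gcStar sh' q.2

/-- l̂ive(sh,Ξ): live addresses with respect to all known stacks. -/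
def liveHat (sh : ACESK) (Ξ : KStore) : Set Addr :=
  reach (touchE sh.e sh.ρ ∪ ⋃ L ∈ KhatLL Ξ sh.kh, L) sh.σ

/-- Γ̂(sh,Ξ): the inexactly-collected abstract state. -/
def gcHat (sh : ACESK) (Ξ : KStore) : ACESK :=
  ⟨sh.e, sh.ρ, restrict sh.σ (liveHat sh Ξ), sh.kh, sh.t⟩

/-- The inexactly garbage-collecting pushdown machine ↦Γ̂. -/
def AStepGCHat (allocF : Expr → Env → Store → Time → Addr)
    (tickF : Expr → Env → Store → Time → Time) :
    ACESK × KStore → ACESK × KStore → Prop :=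
  fun p q => ∃ sh', AStep allocF tickF p (sh', q.2) ∧ q.1 = gcHat sh' q.2


/-- Unrolling is monotone in the continuation store. -/
lemma unroll_mono {Ξ Ξ' : KStore} (h : ∀ τ, Ξ τ ⊆ Ξ' τ) {kh κ}
    (hu : Unroll Ξ kh κ) : Unroll Ξ' kh κ := by
  induction hu with
  | eps => exact .eps
  | cons hm _ ih => exact .cons (h _ hm) ih

/-- Unrolled continuations realize the KLL* computation in the rewrite system. -/
lemma unroll_kll {Ξ : KStore} {kh κ} (hu : Unroll Ξ kh κ) :
    ∀ L, Relation.ReflTransGen (KStepR Ξ) (.run kh L) (.done (kll κ L)) := by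
  induction hu with
  | eps => intro L; exact Relation.ReflTransGen.single .eps
  | cons hm _ ih => intro L; exact Relation.ReflTransGen.head (.cons hm) (ih _)

lemma reach_mono {r r' : Set Addr} {σ : Store} (h : r ⊆ r') :
    reach r σ ⊆ reach r' σ := fun _ ⟨a, ha, hp⟩ => ⟨a, h ha, hp⟩

lemma reach_path {r : Set Addr} {σ : Store} {a b : Addr}
    (hp : Relation.ReflTransGen (ptsTo σ) a b) (ha : a ∈ reach r σ) :
    Relation.ReflTransGen (ptsTo (restrict σ (reach r σ))) a b := by
  induction hp with
  | refl => exact .refl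
  | @tail c d hp' hstep ih =>
    have hc : c ∈ reach r σ := by
      obtain ⟨rt, hrt, hpa⟩ := ha
      exact ⟨rt, hrt, hpa.trans hp'⟩
    obtain ⟨v, hv, hb⟩ := hstep
    exact ih.tail ⟨v, ⟨hc, hv⟩, hb⟩

lemma reach_restrict {r : Set Addr} {σ : Store} :
    reach r σ ⊆ reach r (restrict σ (reach r σ)) :=
  fun _ ⟨a, ha, hp⟩ => ⟨a, ha, reach_path hp ⟨a, ha, .refl⟩⟩

/-- Common conclusion of each case of the soundness proof. -/
lemma main_aux (allocF : Expr → Env → Store → Time → Addr)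
    (tickF : Expr → Env → Store → Time → Time)
    (sh : ACESK) (Ξ : KStore) (e₁ : Expr) (ρ₁ : Env) (σ₁ : Store)
    (κ₁ : List Frame) (t₁ : Time) (ς' : CESK) (kh' : AKont) (Ξ' : KStore)
    (hA : AStep allocF tickF (sh, Ξ) (⟨e₁, ρ₁, σ₁, kh', t₁⟩, Ξ'))
    (hun : Unroll Ξ' kh' κ₁) (hgc : ς' = gcC ⟨e₁, ρ₁, σ₁, κ₁, t₁⟩) :
    ∃ (Ξ'' : KStore) (kh'' : AKont) (σ'' : Store),
      AStepGCHat allocF tickF (sh, Ξ) (⟨ς'.e, ς'.ρ, σ'', kh'', ς'.t⟩, Ξ'') ∧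
      Unroll Ξ'' kh'' ς'.κ ∧
      ∀ a : Addr, restrict ς'.σ (liveC ς') a ⊆
        restrict σ'' (liveHat ⟨ς'.e, ς'.ρ, σ'', kh'', ς'.t⟩ Ξ'') a := by
  subst hgc
  set ς₁ : CESK := ⟨e₁, ρ₁, σ₁, κ₁, t₁⟩ with hς₁
  set sh' : ACESK := ⟨e₁, ρ₁, σ₁, kh', t₁⟩ with hsh'
  refine ⟨Ξ', kh', restrict σ₁ (liveHat sh' Ξ'), ⟨sh', hA, rfl⟩, hun, ?_⟩
  intro a v hv
  obtain ⟨-, ha1, hvσ⟩ :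
      a ∈ liveC (gcC ς₁) ∧ a ∈ liveC ς₁ ∧ v ∈ σ₁ a := hv
  have hsub : liveC ς₁ ⊆ liveHat sh' Ξ' := by
    apply reach_mono
    apply Set.union_subset_union_right
    have hmem : kll κ₁ ∅ ∈ KhatLL Ξ' kh' := unroll_kll hun ∅
    exact Set.subset_biUnion_of_mem (u := fun L => L) hmem
  have haR : a ∈ liveHat sh' Ξ' := hsub ha1
  exact ⟨reach_restrict haR, haR, hvσ⟩

/-- Soundness of the inexactly garbage-collecting pushdown machine Γ̂CESK*tΞ. -/
theorem gc_inexact_soundness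
    (allocF : Expr → Env → Store → Time → Addr)
    (tickF : Expr → Env → Store → Time → Time)
    (epgm : Expr) (t₀ : Time)
    (ς ς' : CESK) (kh : AKont) (Ξ : KStore)
    (hstep : CStepGC allocF tickF ς ς')
    (hinv : StInv allocF tickF epgm t₀ (setKont ς kh) Ξ)
    (hunroll : Unroll Ξ kh ς.κ) :
    ∃ (Ξ' : KStore) (kh' : AKont) (σ'' : Store),
      AStepGCHat allocF tickF (setKont ς kh, Ξ) (⟨ς'.e, ς'.ρ, σ'', kh', ς'.t⟩, Ξ') ∧
      Unroll Ξ' kh' ς'.κ ∧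
      ∀ a : Addr, restrict ς'.σ (liveC ς') a ⊆
        restrict σ'' (liveHat ⟨ς'.e, ς'.ρ, σ'', kh', ς'.t⟩ Ξ') a := by
  obtain ⟨ς₁, hc, hgc⟩ := hstep
  cases hc with
  | var hρ hv =>
    exact main_aux _ _ _ _ _ _ _ _ _ _ _ _ (AStep.var hρ hv) hunroll hgc
  | app =>
    refine main_aux _ _ _ _ _ _ _ _ _ _ _ _ AStep.app ?_ hgc
    refine Unroll.cons ?_ (unroll_mono (fun τ' kh'' h => ?_) hunroll)
    · simp [KStore.join]
    · simp only [KStore.join]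
      split
      · exact Set.mem_insert_iff.mpr (Or.inr h)
      · exact h
  | appL =>
    cases hunroll with
    | cons hm hu =>
      exact main_aux _ _ _ _ _ _ _ _ _ _ _ _ AStep.appL (Unroll.cons hm hu) hgc
  | appR =>
    cases hunroll with
    | cons hm hu =>
      exact main_aux _ _ _ _ _ _ _ _ _ _ _ _ (AStep.appR hm) hu hgc
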